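/- arXiv:2109.04554 — 3 statements merged into one kernel-verified Lean document; each statement's English description precedes it below -/
import Mathlib

section
/- Let V be a set of points, S* and S finite nonempty sets of facilities, and d a metric. Define nrst(f*) = argmin_{f∈S} d(f,f*) for f* ∈ S*. For assignments φ* : V → S* and φ : V → S, define φ'(v) = nrst(φ*(v)). Then for every v ∈ V, d(v, φ'(v)) ≤ 2·d(v, φ*(v)) + d(v, φ(v)). -/
theorem stmt_2 {α V : Type*} [MetricSpace α]
    (Sstar S : Finset α) (hS : S.Nonempty)
    (pt : V → α) (φstar φ : V → α)
    (hφstar : ∀ v, φstar v ∈ Sstar) (hφ : ∀ v, φ v ∈ S)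
    (nrst : α → α)
    (hnrst : ∀ fs ∈ Sstar, nrst fs ∈ S ∧ ∀ f ∈ S, dist (nrst fs) fs ≤ dist f fs) :
    ∀ v, dist (pt v) (nrst (φstar v)) ≤ 2 * dist (pt v) (φstar v) + dist (pt v) (φ v) := by
  intro v
  have h1 := (hnrst (φstar v) (hφstar v)).2 (φ v) (hφ v)
  calc dist (pt v) (nrst (φstar v))
      ≤ dist (pt v) (φstar v) + dist (φstar v) (nrst (φstar v)) := dist_triangle _ _ _
    _ ≤ dist (pt v) (φstar v) + dist (φ v) (φstar v) := by
        rw [dist_comm (φstar v)]; linarith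
    _ ≤ dist (pt v) (φstar v) + (dist (φ v) (pt v) + dist (pt v) (φstar v)) := by
        linarith [dist_triangle (φ v) (pt v) (φstar v)]
    _ = 2 * dist (pt v) (φstar v) + dist (pt v) (φ v) := by rw [dist_comm (φ v)]; ring
end

section
/- With the setup of the previous statement (metric d, assignments φ*, φ, and φ'(v) = nrst(φ*(v))), if Cost_p(ψ) = ∑_{v∈V} d(v, ψ(v))^p with p = 1, then Cost_1(φ') ≤ 2·Cost_1(φ*) + Cost_1(φ). -/
theorem stmt_3 {α V : Type*} [MetricSpace α] [Fintype V]
    (Sstar S : Finset α) (hS : S.Nonempty)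
    (pt : V → α) (φstar φ : V → α)
    (hφstar : ∀ v, φstar v ∈ Sstar) (hφ : ∀ v, φ v ∈ S)
    (nrst : α → α)
    (hnrst : ∀ fs ∈ Sstar, nrst fs ∈ S ∧ ∀ f ∈ S, dist (nrst fs) fs ≤ dist f fs) :
    ∑ v, dist (pt v) (nrst (φstar v)) ≤
      2 * ∑ v, dist (pt v) (φstar v) + ∑ v, dist (pt v) (φ v) := by
  have h : ∀ v, dist (pt v) (nrst (φstar v)) ≤
      2 * dist (pt v) (φstar v) + dist (pt v) (φ v) := by
    intro v
    have h1 := (hnrst _ (hφstar v)).2 (φ v) (hφ v)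
    calc dist (pt v) (nrst (φstar v))
        ≤ dist (pt v) (φstar v) + dist (φstar v) (nrst (φstar v)) := dist_triangle _ _ _
      _ = dist (pt v) (φstar v) + dist (nrst (φstar v)) (φstar v) := by rw [dist_comm (φstar v)]
      _ ≤ dist (pt v) (φstar v) + dist (φ v) (φstar v) := by linarith
      _ ≤ dist (pt v) (φstar v) + (dist (φ v) (pt v) + dist (pt v) (φstar v)) := by
          linarith [dist_triangle (φ v) (pt v) (φstar v)]
      _ = 2 * dist (pt v) (φstar v) + dist (pt v) (φ v) := by rw [dist_comm (φ v)]; ring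
  calc ∑ v, dist (pt v) (nrst (φstar v))
      ≤ ∑ v, (2 * dist (pt v) (φstar v) + dist (pt v) (φ v)) :=
        Finset.sum_le_sum fun v _ => h v
    _ = 2 * ∑ v, dist (pt v) (φstar v) + ∑ v, dist (pt v) (φ v) := by
        rw [Finset.sum_add_distrib, Finset.mul_sum]
end

section
/- With the distance construction of the NP-hardness reduction (d(u_i,l)^p = ⌈n/2⌉ + β for 1 ≤ i ≤ ⌈n/2⌉+1, = β otherwise; d(u_i,r)^p = β for 1 ≤ i ≤ ⌊n/2⌋, = ⌈n/2⌉+β+1 otherwise, n ≥ 2), for any subset X ⊆ {u_1,...,u_n} with X ≠ ∅ and X ≠ V, we have ∑_{v∈X} d(v,l)^p ≠ ∑_{v∈X} d(v,r)^p. -/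
theorem stmt_6 (n : ℕ) (hn : 2 ≤ n) (β : ℝ) (dlp drp : ℕ → ℝ)
    (hdl : ∀ i, dlp i =
      if i ≤ (n + 1) / 2 + 1 then (((n + 1) / 2 : ℕ) : ℝ) + β else β)
    (hdr : ∀ i, drp i =
      if i ≤ n / 2 then β else (((n + 1) / 2 : ℕ) : ℝ) + β + 1)
    (X : Finset ℕ) (hX : X ⊆ Finset.Icc 1 n) (hne : X.Nonempty)
    (hprop : X ≠ Finset.Icc 1 n) :
    ∑ i ∈ X, dlp i ≠ ∑ i ∈ X, drp i := by
  intro heq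
  set m := (n + 1) / 2 with hm
  set s := (X.filter (fun i => i ≤ m + 1)).card with hs
  set t := (X.filter (fun i => ¬ i ≤ n / 2)).card with ht
  have hsum1 : ∑ i ∈ X, dlp i = X.card * β + s * m := by
    have h1 : ∀ i ∈ X, dlp i = β + (if i ≤ m + 1 then (m : ℝ) else 0) := by
      intro i _; rw [hdl i]; split <;> ring
    rw [Finset.sum_congr rfl h1, Finset.sum_add_distrib, Finset.sum_const,
      ← Finset.sum_filter, Finset.sum_const, hs]
    push_cast; ring
  have hsum2 : ∑ i ∈ X, drp i = X.card * β + t * (m + 1) := by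
    have h1 : ∀ i ∈ X, drp i = β + (if ¬ i ≤ n / 2 then ((m : ℝ) + 1) else 0) := by
      intro i _; rw [hdr i]; by_cases h : i ≤ n / 2 <;> simp [h] <;> ring
    rw [Finset.sum_congr rfl h1, Finset.sum_add_distrib, Finset.sum_const,
      ← Finset.sum_filter, Finset.sum_const, ht]
    push_cast; ring
  have hkeyR : (s : ℝ) * m = (t : ℝ) * (m + 1) := by
    rw [hsum1, hsum2] at heq; linarith
  have hkey : s * m = t * (m + 1) := by exact_mod_cast hkeyR
  have hm1 : 1 ≤ m := by omega
  have hmn : n / 2 ≤ m := by omega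
  -- s ≤ m + 1
  have hsub1 : X.filter (fun i => i ≤ m + 1) ⊆ Finset.Icc 1 (m + 1) := by
    intro i hi
    simp only [Finset.mem_filter] at hi
    have := hX hi.1
    simp only [Finset.mem_Icc] at this ⊢
    exact ⟨this.1, hi.2⟩
  have hsle : s ≤ m + 1 := by
    have := Finset.card_le_card hsub1
    simpa [Nat.card_Icc] using this
  have hcop : Nat.Coprime (m + 1) m := Nat.coprime_self_add_left.mpr (Nat.coprime_one_left m)
  have hdvd : (m + 1) ∣ s := by
    have h1 : (m + 1) ∣ s * m := ⟨t, by rw [hkey, Nat.mul_comm]⟩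
    exact hcop.dvd_of_dvd_mul_right h1
  obtain ⟨k, hk⟩ := hdvd
  have hk01 : k = 0 ∨ k = 1 := by
    by_contra h
    have hk2 : 2 ≤ k := by omega
    have : (m + 1) * 2 ≤ (m + 1) * k := Nat.mul_le_mul_left (m + 1) hk2
    omega
  rcases hk01 with hk0 | hk1
  · -- s = 0
    have hs0 : s = 0 := by simp [hk0] at hk; exact hk
    have hfilt : X.filter (fun i => i ≤ m + 1) = ∅ := Finset.card_eq_zero.mp (by omega)
    obtain ⟨x, hx⟩ := hne
    have hxn : ¬ x ≤ m + 1 := by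
      intro h
      have : x ∈ X.filter (fun i => i ≤ m + 1) := Finset.mem_filter.mpr ⟨hx, h⟩
      simp [hfilt] at this
    have hxt : x ∈ X.filter (fun i => ¬ i ≤ n / 2) :=
      Finset.mem_filter.mpr ⟨hx, show ¬ x ≤ n / 2 by omega⟩
    have ht1 : 1 ≤ t := Finset.card_pos.mpr ⟨x, hxt⟩
    have h0 : t * (m + 1) = 0 := by rw [← hkey, hs0, Nat.zero_mul]
    have := Nat.mul_eq_zero.mp h0
    omega
  · -- s = m + 1
    have hsm : s = m + 1 := by simp [hk1] at hk; exact hk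
    have htm : t = m := by
      have h2 : t * (m + 1) = m * (m + 1) := by rw [← hkey, hsm, Nat.mul_comm]
      exact Nat.eq_of_mul_eq_mul_right (by omega) h2
    have hfull1 : X.filter (fun i => i ≤ m + 1) = Finset.Icc 1 (m + 1) := by
      apply Finset.eq_of_subset_of_card_le hsub1
      simp [Nat.card_Icc, ← hs, hsm]
    have hsub2 : X.filter (fun i => ¬ i ≤ n / 2) ⊆ Finset.Icc (n / 2 + 1) n := by
      intro i hi
      simp only [Finset.mem_filter] at hi
      have := hX hi.1
      simp only [Finset.mem_Icc] at this ⊢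
      omega
    have hfull2 : X.filter (fun i => ¬ i ≤ n / 2) = Finset.Icc (n / 2 + 1) n := by
      apply Finset.eq_of_subset_of_card_le hsub2
      rw [Nat.card_Icc, ← ht, htm]; omega
    apply hprop
    apply Finset.Subset.antisymm hX
    intro i hi
    simp only [Finset.mem_Icc] at hi
    by_cases h : i ≤ m + 1
    · have : i ∈ Finset.Icc 1 (m + 1) := Finset.mem_Icc.mpr ⟨hi.1, h⟩
      rw [← hfull1] at this
      exact (Finset.mem_filter.mp this).1
    · have : i ∈ Finset.Icc (n / 2 + 1) n := Finset.mem_Icc.mpr ⟨by omega, hi.2⟩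
      rw [← hfull2] at this
      exact (Finset.mem_filter.mp this).1
end
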